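/- For positive reals x_1 ≥ x_2 ≥ ... ≥ x_k > 0 with x_1 ≤ x_2 + ... + x_k, and d ≥ 2 a natural number, one has (x_1 + ... + x_k)^d ≥ 2(x_1^d + ... + x_k^d). -/

import Mathlib

/-! The largest term is at most half the sum `S`, hence so is every term, and
`x i ^ d ≤ (S / 2) ^ (d - 1) * x i`; summing gives
`∑ x i ^ d ≤ S ^ d / 2 ^ (d - 1) ≤ S ^ d / 2`. -/

open Finset

section OrderedSemiring

variable {ι R : Type*} [CommSemiring R] [PartialOrder R] [IsOrderedRing R]

theorem two_mul_le_sum_of_le_sum_erase [DecidableEq ι] {s : Finset ι} {f : ι → R} {i₀ i : ι}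
    (hi₀ : i₀ ∈ s) (hdom : f i₀ ≤ ∑ j ∈ s.erase i₀, f j) (hi : f i ≤ f i₀) :
    2 * f i ≤ ∑ j ∈ s, f j := by
  rw [← add_sum_erase s f hi₀, two_mul]
  exact add_le_add hi (hi.trans hdom)

theorem two_mul_sum_pow_le_sum_pow {s : Finset ι} {f : ι → R} {d : ℕ}
    (hf : ∀ i ∈ s, 0 ≤ f i) (hhalf : ∀ i ∈ s, 2 * f i ≤ ∑ j ∈ s, f j) (hd : 2 ≤ d) :
    2 * ∑ i ∈ s, f i ^ d ≤ (∑ i ∈ s, f i) ^ d := by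
  obtain ⟨n, rfl⟩ : ∃ n, d = n + 1 := ⟨d - 1, by omega⟩
  calc 2 * ∑ i ∈ s, f i ^ (n + 1)
      ≤ 2 ^ n * ∑ i ∈ s, f i ^ (n + 1) := by
        gcongr
        · exact sum_nonneg fun i hi => pow_nonneg (hf i hi) _
        · exact le_self_pow₀ one_le_two (by omega)
    _ = ∑ i ∈ s, (2 * f i) ^ n * f i := by
        rw [mul_sum]
        exact sum_congr rfl fun i _ => by ring
    _ ≤ ∑ i ∈ s, (∑ j ∈ s, f j) ^ n * f i := by
        gcongr with i hi
        · exact hf i hi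
        · exact mul_nonneg zero_le_two (hf i hi)
        · exact hhalf i hi
    _ = (∑ i ∈ s, f i) ^ (n + 1) := by rw [← mul_sum, pow_succ]

end OrderedSemiring

theorem weight_inequality_powers (k d : ℕ) (hk : 2 ≤ k) (hd : 2 ≤ d)
    (x : Fin k → ℝ) (hpos : ∀ i, 0 < x i)
    (hmono : ∀ i j : Fin k, i ≤ j → x j ≤ x i)
    (hdom : x ⟨0, by omega⟩ ≤ ∑ i ∈ Finset.univ.erase ⟨0, by omega⟩, x i) :
    2 * ∑ i, (x i) ^ d ≤ (∑ i, x i) ^ d :=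
  two_mul_sum_pow_le_sum_pow (fun i _ => (hpos i).le)
    (fun i _ => two_mul_le_sum_of_le_sum_erase (mem_univ _) hdom
      (hmono _ i (Fin.le_def.2 i.1.zero_le))) hd
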